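/- arXiv:math/0701052 — 3 statements merged into one kernel-verified Lean document; each statement's English description precedes it below -/
import Mathlib

section
/- Let 𝒪 be the ring of integers of a nonarchimedean local field with residue field of order q, and let p be a prime not dividing q. Then 𝒪ˣ/(𝒪ˣ)^{p^n} is cyclic, and it has order p^n if and only if q ≡ 1 (mod p^n). -/
/-!
Reduction modulo the maximal ideal identifies `𝒪ˣ ⧸ (𝒪ˣ)^N` with `kˣ ⧸ (kˣ)^N` for the residue
field `k`, as soon as `N` is invertible in `k`: by Hensel's lemma applied to `X ^ N - u`, every
unit `u ≡ 1` is an `N`-th power. The group `kˣ` is cyclic of order `q - 1`, so the quotient is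
cyclic of order `gcd (q - 1) (p ^ n)`, which equals `p ^ n` exactly when `p ^ n ∣ q - 1`.
-/

open IsLocalRing Polynomial

theorem Nat.cast_ne_zero_of_coprime_card {R : Type*} [Ring R] [Nontrivial R] [Finite R] {m : ℕ}
    (hm : m.Coprime (Nat.card R)) : (m : R) ≠ 0 := by
  have := Fintype.ofFinite R
  intro h
  have hcard : ringChar R ∣ Nat.card R :=
    ringChar.dvd (by rw [Nat.card_eq_fintype_card]; exact Nat.cast_card_eq_zero R)
  exact CharP.ringChar_ne_one (Nat.eq_one_of_dvd_coprimes hm (ringChar.dvd h) hcard)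

namespace IsLocalRing

variable {R : Type*} [CommRing R] [IsLocalRing R] [HenselianRing R (maximalIdeal R)] {N : ℕ}
  (hNk : (N : ResidueField R) ≠ 0)
include hNk

theorem exists_pow_eq_of_residue_eq_one {u : Rˣ} (hu : residue R u = 1) :
    ∃ v : Rˣ, v ^ N = u := by
  have hN : N ≠ 0 := by rintro rfl; simp at hNk
  obtain ⟨a, ha, -⟩ := HenselianRing.is_henselian (X ^ N - C (u : R))
    (monic_X_pow_sub_C _ hN) 1
    (by rw [← residue_eq_zero_iff]; simp [hu])
    (show IsUnit (residue R _) by simpa [derivative_X_pow] using hNk.isUnit)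
  have haN : a ^ N = u := by simpa [sub_eq_zero] using ha
  have hau : IsUnit a := (isUnit_pow_iff hN).mp (haN ▸ u.isUnit)
  exact ⟨hau.unit, Units.ext (by simp [haN])⟩

theorem units_mem_range_powMonoidHom_iff (u : Rˣ) :
    u ∈ (powMonoidHom N : Rˣ →* Rˣ).range ↔
      Units.map (residue R : R →* ResidueField R) u ∈
        (powMonoidHom N : (ResidueField R)ˣ →* (ResidueField R)ˣ).range := by
  set res : Rˣ →* (ResidueField R)ˣ := Units.map (residue R : R →* ResidueField R)
  constructor
  · rintro ⟨v, rfl⟩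
    exact ⟨res v, by simp⟩
  · rintro ⟨y, hy⟩
    obtain ⟨w, rfl⟩ := surjective_units_map_of_local_ringHom _ residue_surjective inferInstance y
    obtain ⟨v, hv⟩ : ∃ v : Rˣ, v ^ N = u * (w ^ N)⁻¹ := by
      refine exists_pow_eq_of_residue_eq_one hNk ?_
      have : res (u * (w ^ N)⁻¹) = 1 := by
        rw [map_mul, map_inv, map_pow, ← hy, powMonoidHom_apply]
        exact mul_inv_cancel _
      simpa [res] using congrArg Units.val this
    exact ⟨v * w, by rw [powMonoidHom_apply, mul_pow, hv, inv_mul_cancel_right]⟩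

noncomputable def unitsQuotPowEquivResidueField :
    Rˣ ⧸ (powMonoidHom N : Rˣ →* Rˣ).range ≃*
      (ResidueField R)ˣ ⧸ (powMonoidHom N : (ResidueField R)ˣ →* (ResidueField R)ˣ).range :=
  let φ : Rˣ →* (ResidueField R)ˣ ⧸ (powMonoidHom N).range :=
    (QuotientGroup.mk' _).comp (Units.map (residue R : R →* ResidueField R))
  have hker : (powMonoidHom N : Rˣ →* Rˣ).range = φ.ker := by
    ext u
    rw [units_mem_range_powMonoidHom_iff hNk, MonoidHom.mem_ker, MonoidHom.comp_apply,
      QuotientGroup.mk'_apply, QuotientGroup.eq_one_iff]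
  (QuotientGroup.quotientMulEquivOfEq hker).trans <| QuotientGroup.quotientKerEquivOfSurjective φ <|
    (QuotientGroup.mk'_surjective _).comp <|
      surjective_units_map_of_local_ringHom _ residue_surjective inferInstance

end IsLocalRing

theorem stmt4_general (𝒪 : Type*) [CommRing 𝒪] [IsDomain 𝒪] [IsDiscreteValuationRing 𝒪]
    [IsAdicComplete (IsLocalRing.maximalIdeal 𝒪) 𝒪]
    [Finite (IsLocalRing.ResidueField 𝒪)]
    (q : ℕ) (hq : Nat.card (IsLocalRing.ResidueField 𝒪) = q)
    (p : ℕ) (hp : p.Prime) (hpq : ¬ p ∣ q) (n : ℕ) :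
    IsCyclic (𝒪ˣ ⧸ (powMonoidHom (p ^ n) : 𝒪ˣ →* 𝒪ˣ).range) ∧
      (Nat.card (𝒪ˣ ⧸ (powMonoidHom (p ^ n) : 𝒪ˣ →* 𝒪ˣ).range) = p ^ n ↔
        q ≡ 1 [MOD p ^ n]) := by
  have hNk : ((p ^ n : ℕ) : ResidueField 𝒪) ≠ 0 :=
    Nat.cast_ne_zero_of_coprime_card (hq ▸ ((hp.coprime_iff_not_dvd.mpr hpq).pow_left n))
  let e := unitsQuotPowEquivResidueField hNk
  refine ⟨e.isCyclic.mpr inferInstance, ?_⟩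
  have hq1 : 1 ≤ q := hq ▸ Nat.card_pos
  rw [Nat.card_congr e.toEquiv, ← Subgroup.index, IsCyclic.index_powMonoidHom_range,
    Nat.card_units, hq, Nat.gcd_eq_right_iff_dvd, ← Nat.modEq_iff_dvd' hq1]
  exact Nat.ModEq.comm

/-- Let `𝒪` be the ring of integers of a nonarchimedean local field (a complete discrete
valuation ring) with finite residue field of order `q`, and let `p` be a prime not dividing
`q`.  Then `𝒪ˣ/(𝒪ˣ)^(p^n)` is cyclic, and it has order `p ^ n` iff `q ≡ 1 (mod p ^ n)`. -/
theorem stmt4 (𝒪 : Type*) [CommRing 𝒪] [IsDomain 𝒪] [IsDiscreteValuationRing 𝒪]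
    [IsAdicComplete (IsLocalRing.maximalIdeal 𝒪) 𝒪]
    [Finite (IsLocalRing.ResidueField 𝒪)]
    (q : ℕ) (hq : Nat.card (IsLocalRing.ResidueField 𝒪) = q)
    (p : ℕ) (hp : p.Prime) (hpq : ¬ p ∣ q) (n : ℕ) (hn : 1 ≤ n) :
    IsCyclic (𝒪ˣ ⧸ (powMonoidHom (p ^ n) : 𝒪ˣ →* 𝒪ˣ).range) ∧
      (Nat.card (𝒪ˣ ⧸ (powMonoidHom (p ^ n) : 𝒪ˣ →* 𝒪ˣ).range) = p ^ n ↔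
        q ≡ 1 [MOD p ^ n]) :=
  stmt4_general 𝒪 q hq p hp hpq n
end

section
/- Let K be a field containing a primitive p^n-th root of unity and let f ∈ Kˣ have image of order p^n in Kˣ/(Kˣ)^{p^n}. Then the splitting field of X^{p^n} − f over K is a cyclic extension of K of degree p^n. -/
/-!
Since `f` has order `p ^ n` modulo `p ^ n`-th powers, it is not a `p`-th power. This already
makes `X ^ p ^ n - f` irreducible, by Kummer's argument: if a root `r` has degree `d` over `K`,
its conjugates are the `ζ ^ i * r`, so their product shows `r ^ d ∈ K`. Together with
`r ^ p ^ n ∈ K` this gives `r ^ gcd(d, p ^ n) ∈ K`, hence `d ∣ p ^ n`; and `d = p ^ e` with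
`e < n` would make `f = (r ^ d) ^ p ^ (n - e)` a `p`-th power. For an irreducible `X ^ m - a`
over a field with a primitive `m`-th root of unity, the splitting field is cyclic of degree `m`.
-/

open Polynomial

theorem Subfield.pow_gcd_mem {L : Type*} [Field L] (F : Subfield L) {x : L} (hx : x ≠ 0)
    {m n : ℕ} (hm : x ^ m ∈ F) (hn : x ^ n ∈ F) : x ^ m.gcd n ∈ F := by
  have hbezout : ((m.gcd n : ℕ) : ℤ) = m * m.gcdA n + n * m.gcdB n := Nat.gcd_eq_gcd_ab m n
  rw [← zpow_natCast, hbezout, zpow_add₀ hx, zpow_mul, zpow_mul, zpow_natCast, zpow_natCast]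
  exact F.mul_mem (F.zpow_mem hm _) (F.zpow_mem hn _)

section Kummer

variable {K L : Type*} [Field K] [Field L] [Algebra K L] [IsAlgClosed L]
  {q : ℕ} [NeZero q] {ζ : K} {r : L}

theorem pow_natDegree_minpoly_mem_fieldRange (hζ : IsPrimitiveRoot ζ q) (hr : r ≠ 0)
    (hrq : r ^ q ∈ (algebraMap K L).fieldRange) :
    r ^ (minpoly K r).natDegree ∈ (algebraMap K L).fieldRange := by
  set F := (algebraMap K L).fieldRange
  obtain ⟨c, hc⟩ := hrq
  have hint : IsIntegral K r := .of_pow (NeZero.pos q) (hc ▸ isIntegral_algebraMap)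
  set M := (minpoly K r).aroots L
  have hsplit : ((minpoly K r).map (algebraMap K L)).Splits := IsAlgClosed.splits _
  have hconj : ∀ ρ ∈ M, ρ ^ q = r ^ q := by
    intro ρ hρ
    have hdvd : minpoly K r ∣ X ^ q - C c := minpoly.dvd K r (by simp [hc])
    simpa [hc, sub_eq_zero] using aeval_eq_zero_of_dvd_aeval_eq_zero hdvd (mem_aroots.mp hρ).2
  have hne : ∀ ρ ∈ M, ρ ≠ 0 := fun ρ hρ h0 ↦ hr <| by
    simpa [h0, NeZero.ne q] using (hconj ρ hρ).symm
  have hquot : ∀ ρ ∈ M, r / ρ ∈ F := by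
    intro ρ hρ
    obtain ⟨i, -, hi⟩ := (hζ.map_of_injective (algebraMap K L).injective).eq_pow_of_pow_eq_one
      (ξ := r / ρ) (by rw [div_pow, hconj ρ hρ, div_self (pow_ne_zero _ hr)])
    exact ⟨ζ ^ i, by simpa using hi⟩
  have hprod : M.prod ∈ F := by
    have hcoeff := hsplit.coeff_zero_eq_prod_roots_of_monic ((minpoly.monic hint).map _)
    have hprod_eq : M.prod = (-1) ^ ((minpoly K r).map (algebraMap K L)).natDegree *
        algebraMap K L ((minpoly K r).coeff 0) := by
      rw [← coeff_map, hcoeff, ← mul_assoc, ← pow_add, Even.neg_one_pow ⟨_, rfl⟩, one_mul]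
    rw [hprod_eq]
    exact F.mul_mem (F.pow_mem (F.neg_mem F.one_mem) _) ⟨_, rfl⟩
  have hcard : M.card = (minpoly K r).natDegree := by
    rw [← hsplit.natDegree_eq_card_roots, (minpoly.monic hint).natDegree_map]
  have hpow_eq : r ^ (minpoly K r).natDegree = (M.map (r / ·)).prod * M.prod := by
    rw [Multiset.prod_map_div, Multiset.map_const', Multiset.prod_replicate, hcard,
      Multiset.map_id', div_mul_cancel₀]
    exact Multiset.prod_ne_zero (fun h ↦ hne 0 h rfl)
  rw [hpow_eq]
  exact F.mul_mem (F.multiset_prod_mem _ (by simpa using hquot)) hprod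

theorem natDegree_minpoly_dvd (hζ : IsPrimitiveRoot ζ q) (hr : r ≠ 0)
    (hrq : r ^ q ∈ (algebraMap K L).fieldRange) : (minpoly K r).natDegree ∣ q := by
  have hint : IsIntegral K r := .of_pow (NeZero.pos q) (hrq.choose_spec ▸ isIntegral_algebraMap)
  obtain ⟨c, hc⟩ :=
    Subfield.pow_gcd_mem _ hr (pow_natDegree_minpoly_mem_fieldRange hζ hr hrq) hrq
  have hle : (minpoly K r).natDegree ≤ (minpoly K r).natDegree.gcd q := by
    have hdvd : minpoly K r ∣ X ^ (minpoly K r).natDegree.gcd q - C c :=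
      minpoly.dvd K r (by simp [hc])
    simpa using natDegree_le_of_dvd hdvd
      (X_pow_sub_C_ne_zero (Nat.gcd_pos_of_pos_right _ (NeZero.pos q)) c)
  have hgcd := le_antisymm (Nat.le_of_dvd (minpoly.natDegree_pos hint) (Nat.gcd_dvd_left _ q)) hle
  exact hgcd ▸ Nat.gcd_dvd_right _ q

end Kummer

theorem X_pow_sub_C_irreducible_of_isPrimitiveRoot_prime_pow {K : Type*} [Field K] {p n : ℕ}
    (hp : p.Prime) {ζ : K} (hζ : IsPrimitiveRoot ζ (p ^ n)) {a : K}
    (ha : ∀ b : K, b ^ p ≠ a) :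
    Irreducible (X ^ p ^ n - C a) := by
  have : NeZero (p ^ n) := ⟨pow_ne_zero _ hp.ne_zero⟩
  have ha0 : a ≠ 0 := fun h ↦ ha 0 (by simp [h, hp.ne_zero])
  obtain ⟨r, hr⟩ := IsAlgClosed.exists_pow_nat_eq (algebraMap K (AlgebraicClosure K) a)
    (NeZero.pos (p ^ n))
  have hr0 : r ≠ 0 := by
    rintro rfl
    rw [zero_pow (NeZero.ne _)] at hr
    exact ha0 ((map_eq_zero _).mp hr.symm)
  have hrq : r ^ p ^ n ∈ (algebraMap K _).fieldRange := ⟨a, hr.symm⟩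
  obtain ⟨e, hen, hd⟩ := (Nat.dvd_prime_pow hp).mp (natDegree_minpoly_dvd hζ hr0 hrq)
  have he : e = n := by
    by_contra hne
    obtain ⟨c, hc⟩ := pow_natDegree_minpoly_mem_fieldRange hζ hr0 hrq
    apply ha (c ^ p ^ (n - e - 1))
    apply (algebraMap K (AlgebraicClosure K)).injective
    rw [map_pow, map_pow, hc, hd, ← hr, ← pow_mul, ← pow_mul, ← pow_succ, ← pow_add]
    congr 2
    omega
  have hdvd : minpoly K r ∣ X ^ p ^ n - C a := minpoly.dvd K r (by simp [hr])
  refine (associated_of_dvd_of_natDegree_le hdvd (X_pow_sub_C_ne_zero (NeZero.pos _) a)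
    ?_).irreducible (minpoly.irreducible (Algebra.IsIntegral.isIntegral r))
  rw [natDegree_X_pow_sub_C, hd, he]

theorem pow_ne_of_orderOf_mk_eq {G : Type*} [CommGroup G] {p n : ℕ} (hp : p.Prime) (hn : 1 ≤ n)
    {g : G}
    (hg : orderOf (QuotientGroup.mk g : G ⧸ (powMonoidHom (p ^ n) : G →* G).range) = p ^ n)
    (u : G) : u ^ p ≠ g := by
  rintro rfl
  have hpow : (QuotientGroup.mk (u ^ p) : G ⧸ (powMonoidHom (p ^ n) : G →* G).range)
      ^ p ^ (n - 1) = 1 := by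
    rw [← QuotientGroup.mk_pow, QuotientGroup.eq_one_iff, ← pow_mul, ← pow_succ',
      Nat.sub_add_cancel hn]
    exact ⟨u, rfl⟩
  have hdvd := orderOf_dvd_of_pow_eq_one hpow
  rw [hg, Nat.pow_dvd_pow_iff_le_right hp.one_lt] at hdvd
  omega

/-- If `K` contains a primitive `p ^ n`-th root of unity and `f ∈ Kˣ` has image of order
`p ^ n` in `Kˣ/(Kˣ)^(p^n)`, then the splitting field of `X ^ p ^ n - f` over `K` is a cyclic
extension of degree `p ^ n`. -/
theorem stmt5 (p n : ℕ) (hp : p.Prime) (hn : 1 ≤ n)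
    (K : Type*) [Field K] (ζ : K) (hζ : IsPrimitiveRoot ζ (p ^ n))
    (f : Kˣ)
    (hf : orderOf (QuotientGroup.mk f : Kˣ ⧸ (powMonoidHom (p ^ n) : Kˣ →* Kˣ).range)
      = p ^ n) :
    IsGalois K ((X ^ (p ^ n) - C (f : K)).SplittingField) ∧
    IsCyclic ((X ^ (p ^ n) - C (f : K)).SplittingField ≃ₐ[K]
      (X ^ (p ^ n) - C (f : K)).SplittingField) ∧
    Module.finrank K ((X ^ (p ^ n) - C (f : K)).SplittingField) = p ^ n := by
  have hf_not_pow : ∀ b : K, b ^ p ≠ f := by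
    intro b hb
    have hb0 : b ≠ 0 := by
      rintro rfl
      exact f.ne_zero (by rw [← hb, zero_pow hp.ne_zero])
    exact pow_ne_of_orderOf_mk_eq hp hn hf (Units.mk0 b hb0) (Units.ext (by simpa using hb))
  have H := X_pow_sub_C_irreducible_of_isPrimitiveRoot_prime_pow hp hζ hf_not_pow
  have : NeZero (p ^ n) := ⟨pow_ne_zero _ hp.ne_zero⟩
  have hζ' : (primitiveRoots (p ^ n) K).Nonempty :=
    ⟨ζ, (mem_primitiveRoots (NeZero.pos _)).mpr hζ⟩
  exact ⟨isGalois_of_isSplittingField_X_pow_sub_C hζ' H _,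
    isCyclic_of_isSplittingField_X_pow_sub_C hζ' H _,
    finrank_of_isSplittingField_X_pow_sub_C hζ' H _⟩
end

section
/- Let v be a discrete valuation on a field M, p a prime, n ≥ 1, and let U ≤ Mˣ be a subgroup with v(u) = 0 for all u ∈ U. If f ∈ Mˣ has v(f) = p^{m₁} with m₁ < n, then the index of U·(Mˣ)^{p^n} in the subgroup generated by U, f, and (Mˣ)^{p^n} is divisible by p^{n-m₁}. -/
/-!
Reducing the valuation modulo `p ^ n` gives a homomorphism `ψ : Mˣ → ℤ/p^n` that kills `U` and
all `p ^ n`-th powers, so the index in question is a multiple of the order of the image of the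
subgroup generated by `U`, `f` and the `p ^ n`-th powers, hence of the order of `ψ f = p ^ m₁`,
which is `p ^ (n - m₁)`.
-/

theorem Subgroup.orderOf_map_dvd_relIndex {G H : Type*} [Group G] [Group H] (ψ : G →* H)
    {A B : Subgroup G} (hA : A ≤ ψ.ker) {g : G} (hg : g ∈ B) :
    orderOf (ψ g) ∣ A.relIndex B :=
  calc orderOf (ψ g) ∣ Nat.card (B.map ψ) := orderOf_dvd_natCard _ (mem_map_of_mem ψ hg)
    _ = ψ.ker.relIndex B := (relIndex_ker B ψ).symm
    _ ∣ A.relIndex B := relIndex_dvd_of_le_left B hA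

theorem MonoidHom.range_powMonoidHom_le_ker {G H : Type*} [CommGroup G] [Group H] (ψ : G →* H)
    {N : ℕ} (hN : ∀ h : H, h ^ N = 1) : (powMonoidHom N : G →* G).range ≤ ψ.ker := by
  rintro _ ⟨x, rfl⟩
  rw [mem_ker, powMonoidHom_apply, map_pow, hN]

theorem ZMod.pow_card_multiplicative (N : ℕ) (x : Multiplicative (ZMod N)) : x ^ N = 1 := by
  rw [← ofAdd_toAdd x, ← ofAdd_nsmul, nsmul_eq_mul, ZMod.natCast_self, zero_mul, ofAdd_zero]

theorem ZMod.addOrderOf_natCast_pow {p : ℕ} (hp : 0 < p) {m n : ℕ} (h : m ≤ n) :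
    addOrderOf ((p ^ m : ℕ) : ZMod (p ^ n)) = p ^ (n - m) := by
  rw [ZMod.addOrderOf_coe _ (pow_pos hp n).ne', Nat.gcd_eq_right (pow_dvd_pow p h),
    Nat.pow_div h hp]

theorem stmt7_general (M : Type*) [Field M] (v : Mˣ →* Multiplicative ℤ)
    (p : ℕ) (hp : p.Prime) (m₁ n : ℕ) (h : m₁ < n)
    (U : Subgroup Mˣ) (hU : ∀ u ∈ U, v u = Multiplicative.ofAdd (0 : ℤ))
    (f : Mˣ) (hf : v f = Multiplicative.ofAdd ((p : ℤ) ^ m₁)) :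
    (p : ℕ) ^ (n - m₁) ∣
      Subgroup.relIndex (U ⊔ (powMonoidHom (p ^ n) : Mˣ →* Mˣ).range)
        (U ⊔ Subgroup.zpowers f ⊔ (powMonoidHom (p ^ n) : Mˣ →* Mˣ).range) := by
  set ψ : Mˣ →* Multiplicative (ZMod (p ^ n)) :=
    (AddMonoidHom.toMultiplicative (Int.castAddHom (ZMod (p ^ n)))).comp v
  have hker : U ⊔ (powMonoidHom (p ^ n) : Mˣ →* Mˣ).range ≤ ψ.ker :=
    sup_le (fun u hu ↦ by simp [ψ, hU u hu])
      (ψ.range_powMonoidHom_le_ker (ZMod.pow_card_multiplicative _))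
  have hψf : ψ f = Multiplicative.ofAdd ((p ^ m₁ : ℕ) : ZMod (p ^ n)) := by simp [ψ, hf]
  calc p ^ (n - m₁) = orderOf (ψ f) := by
        rw [hψf, orderOf_ofAdd_eq_addOrderOf, ZMod.addOrderOf_natCast_pow hp.pos h.le]
    _ ∣ _ := Subgroup.orderOf_map_dvd_relIndex ψ hker
        (Subgroup.mem_sup_left (Subgroup.mem_sup_right (Subgroup.mem_zpowers f)))

/-- Let `v` be a surjective discrete valuation on a field `M`, `U ≤ Mˣ` a subgroup with
`v u = 0` for all `u ∈ U`, and `f ∈ Mˣ` with `v f = p ^ m₁`, `m₁ < n`.  Then the index of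
`U·(Mˣ)^(p^n)` in the subgroup generated by `U`, `f` and `(Mˣ)^(p^n)` is divisible by
`p ^ (n - m₁)`. -/
theorem stmt7 (M : Type*) [Field M] (v : Mˣ →* Multiplicative ℤ)
    (hv : Function.Surjective v) (p : ℕ) (hp : p.Prime) (m₁ n : ℕ) (h : m₁ < n)
    (U : Subgroup Mˣ) (hU : ∀ u ∈ U, v u = Multiplicative.ofAdd (0 : ℤ))
    (f : Mˣ) (hf : v f = Multiplicative.ofAdd ((p : ℤ) ^ m₁)) :
    (p : ℕ) ^ (n - m₁) ∣
      Subgroup.relIndex (U ⊔ (powMonoidHom (p ^ n) : Mˣ →* Mˣ).range)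
        (U ⊔ Subgroup.zpowers f ⊔ (powMonoidHom (p ^ n) : Mˣ →* Mˣ).range) :=
  stmt7_general M v p hp m₁ n h U hU f hf
end
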